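/- Let c be a circle-count function and T : (Fin n → Bool) → ℕ any function, and suppose the bracket ⟨n, c, T⟩ is nonzero. Then Span ⟨n, c, T⟩ ≤ 2n + 2(c(S_A) + c(S_B) − 2). If moreover c(S_A) + c(S_B) ≤ n + 2, then Span ⟨n, c, T⟩ ≤ 4n. (This is the proposition that the span of the Kauffman bracket of an n-crossing link diagram in the solid torus is at most 4n.) -/

import Mathlib

open LaurentPolynomial Polynomial Finset

/-- `aC σ` is the number of A-smoothings of the state `σ`, i.e. the number of
coordinates where `σ` takes the value `true`. -/
def aC {n : ℕ} (σ : Fin n → Bool) : ℕ := (Finset.univ.filter fun i => σ i = true).card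

/-- `bC σ = n - aC σ` is the number of B-smoothings of the state `σ`. -/
def bC {n : ℕ} (σ : Fin n → Bool) : ℕ := n - aC σ

/-- Two states are adjacent if they differ in exactly one coordinate. -/
def Adjacent {n : ℕ} (σ τ : Fin n → Bool) : Prop :=
  (Finset.univ.filter fun i => σ i ≠ τ i).card = 1

/-- `StateLE σ τ` iff `τ i = true` whenever `σ i = true`. -/
def StateLE {n : ℕ} (σ τ : Fin n → Bool) : Prop := ∀ i, σ i = true → τ i = true

/-- A circle-count function: `c σ ≥ 1` for all states and `|c σ - c τ| = 1`
for adjacent states. -/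
def IsCircleCount {n : ℕ} (c : (Fin n → Bool) → ℕ) : Prop :=
  (∀ σ, 1 ≤ c σ) ∧ ∀ σ τ, Adjacent σ τ → |(c σ : ℤ) - (c τ : ℤ)| = 1

/-- The all-A state: the constant-`true` state. -/
def SA (n : ℕ) : Fin n → Bool := fun _ => true

/-- The all-B state: the constant-`false` state. -/
def SB (n : ℕ) : Fin n → Bool := fun _ => false

/-- A state `σ` is A-maximal for `c` if `c σ = c S_A + b σ`. -/
def AMaximal {n : ℕ} (c : (Fin n → Bool) → ℕ) (σ : Fin n → Bool) : Prop :=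
  c σ = c (SA n) + bC σ

/-- A state `σ` is B-minimal for `c` if `c σ = c S_B + a σ`. -/
def BMinimal {n : ℕ} (c : (Fin n → Bool) → ℕ) (σ : Fin n → Bool) : Prop :=
  c σ = c (SB n) + aC σ

instance {n : ℕ} (c : (Fin n → Bool) → ℕ) : DecidablePred (AMaximal c) :=
  fun σ => inferInstanceAs (Decidable (c σ = c (SA n) + bC σ))

instance {n : ℕ} (c : (Fin n → Bool) → ℕ) : DecidablePred (BMinimal c) :=
  fun σ => inferInstanceAs (Decidable (c σ = c (SB n) + aC σ))

/-- The contribution `A^{a(σ)-b(σ)} (−A²−A⁻²)^{c(σ)-1} t^{T(σ)}` of the state `σ`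
to the Kauffman bracket; a Laurent polynomial in `A` over `ℤ[t]`, where `A` is the
Laurent variable `LaurentPolynomial.T 1` and `t` is `Polynomial.X`. -/
noncomputable def contrib {n : ℕ} (c T : (Fin n → Bool) → ℕ) (σ : Fin n → Bool) :
    LaurentPolynomial (Polynomial ℤ) :=
  LaurentPolynomial.T ((aC σ : ℤ) - (bC σ : ℤ)) *
    (-(LaurentPolynomial.T 2) - LaurentPolynomial.T (-2)) ^ (c σ - 1) *
    LaurentPolynomial.C (Polynomial.X ^ T σ)

/-- The Kauffman bracket state sum `⟨n, c, T⟩`. -/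
noncomputable def bracket (n : ℕ) (c T : (Fin n → Bool) → ℕ) :
    LaurentPolynomial (Polynomial ℤ) :=
  ∑ σ : Fin n → Bool, contrib c T σ

/-- The coefficient of `A^j` in a Laurent polynomial over `ℤ[t]`. -/
noncomputable def coeffA (P : LaurentPolynomial (Polynomial ℤ)) (j : ℤ) : Polynomial ℤ := AddMonoidAlgebra.coeff P j

/-- The largest exponent of `A` with nonzero coefficient (junk value `0` for `P = 0`). -/
noncomputable def maxdeg (P : LaurentPolynomial (Polynomial ℤ)) : ℤ := WithBot.unbotD 0 (AddMonoidAlgebra.coeff P).support.max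

/-- The smallest exponent of `A` with nonzero coefficient (junk value `0` for `P = 0`). -/
noncomputable def mindeg (P : LaurentPolynomial (Polynomial ℤ)) : ℤ := WithTop.untopD 0 (AddMonoidAlgebra.coeff P).support.min

/-- `spanDeg P = maxdeg P - mindeg P`. -/
noncomputable def spanDeg (P : LaurentPolynomial (Polynomial ℤ)) : ℤ := maxdeg P - mindeg P


section Aux

lemma cc_le {n : ℕ} (c : (Fin n → Bool) → ℕ)
    (hc : ∀ σ τ, (Finset.univ.filter fun i => σ i ≠ τ i).card = 1 → |(c σ : ℤ) - (c τ : ℤ)| = 1) :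
    ∀ k (σ τ : Fin n → Bool), (Finset.univ.filter fun i => σ i ≠ τ i).card = k →
      c σ ≤ c τ + k := by
  intro k
  induction k with
  | zero =>
    intro σ τ h
    have : σ = τ := by
      funext i
      by_contra hi
      have : i ∈ Finset.univ.filter fun i => σ i ≠ τ i := by simpa using hi
      rw [Finset.card_eq_zero] at h
      simp [h] at this
    simp [this]
  | succ k ih =>
    intro σ τ h
    have hne : (Finset.univ.filter fun i => σ i ≠ τ i).Nonempty := by
      rw [← Finset.card_pos, h]; omega
    obtain ⟨i, hi⟩ := hne
    have hi' : σ i ≠ τ i := by simpa using hi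
    set σ' := Function.update σ i (τ i) with hσ'
    have hfilt : (Finset.univ.filter fun j => σ' j ≠ τ j)
        = (Finset.univ.filter fun j => σ j ≠ τ j).erase i := by
      ext j
      rcases eq_or_ne j i with rfl | hj
      · simp [hσ', Function.update_self]
      · simp [hσ', Function.update_of_ne hj, hj]
    have hcard : (Finset.univ.filter fun j => σ' j ≠ τ j).card = k := by
      rw [hfilt, Finset.card_erase_of_mem hi, h]; omega
    have hadj : (Finset.univ.filter fun j => σ j ≠ σ' j).card = 1 := by
      have : (Finset.univ.filter fun j => σ j ≠ σ' j) = {i} := by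
        ext j
        rcases eq_or_ne j i with rfl | hj
        · simp [hσ', Function.update_self, hi']
        · simp [hσ', Function.update_of_ne hj, hj]
      rw [this, Finset.card_singleton]
    have h1 : |(c σ : ℤ) - (c σ' : ℤ)| = 1 := hc σ σ' hadj
    have h2 := ih σ' τ hcard
    have := abs_le.mp h1.le
    omega

lemma suppBd_mul {P Q : LaurentPolynomial (Polynomial ℤ)} {l1 h1 l2 h2 : ℤ}
    (hP : ∀ j ∈ P.coeff.support, l1 ≤ j ∧ j ≤ h1) (hQ : ∀ j ∈ Q.coeff.support, l2 ≤ j ∧ j ≤ h2) :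
    ∀ j ∈ (P * Q).coeff.support, l1 + l2 ≤ j ∧ j ≤ h1 + h2 := by
  intro j hj
  have := AddMonoidAlgebra.support_coeff_mul_subset P Q hj
  rw [Finset.mem_add] at this
  obtain ⟨x, hx, y, hy, rfl⟩ := this
  obtain ⟨a, b⟩ := hP x hx
  obtain ⟨d, e⟩ := hQ y hy
  constructor <;> omega

lemma suppBd_T (k : ℤ) : ∀ j ∈ (LaurentPolynomial.T k : LaurentPolynomial (Polynomial ℤ)).coeff.support,
    k ≤ j ∧ j ≤ k := by
  intro j hj
  have : j ∈ ({k} : Finset ℤ) := Finsupp.support_single_subset hj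
  simp at this
  omega

lemma suppBd_pow (m : ℕ) :
    ∀ j ∈ ((-(LaurentPolynomial.T 2) - LaurentPolynomial.T (-2) :
      LaurentPolynomial (Polynomial ℤ)) ^ m).coeff.support,
      -(2 * m : ℤ) ≤ j ∧ j ≤ 2 * m := by
  induction m with
  | zero =>
    intro j hj
    rw [pow_zero] at hj
    rw [← LaurentPolynomial.T_zero] at hj
    have := suppBd_T 0 j hj
    omega
  | succ m ih =>
    have hbase : ∀ j ∈ (-(LaurentPolynomial.T 2) - LaurentPolynomial.T (-2) :
        LaurentPolynomial (Polynomial ℤ)).coeff.support, (-2 : ℤ) ≤ j ∧ j ≤ 2 := by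
      intro j hj
      have h1 : j ∈ (-(LaurentPolynomial.T 2) : LaurentPolynomial (Polynomial ℤ)).coeff.support
          ∪ (-(LaurentPolynomial.T (-2)) : LaurentPolynomial (Polynomial ℤ)).coeff.support := by
        have := Finsupp.support_add (g₁ := (-(LaurentPolynomial.T 2) : LaurentPolynomial (Polynomial ℤ)).coeff)
          (g₂ := (-(LaurentPolynomial.T (-2)) : LaurentPolynomial (Polynomial ℤ)).coeff) (by rw [← AddMonoidAlgebra.coeff_add, ← sub_eq_add_neg]; exact hj)
        exact this
      rw [Finset.mem_union, AddMonoidAlgebra.coeff_neg, AddMonoidAlgebra.coeff_neg, Finsupp.support_neg, Finsupp.support_neg] at h1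
      rcases h1 with h | h
      · have := suppBd_T 2 j h; omega
      · have := suppBd_T (-2) j h; omega
    intro j hj
    rw [pow_succ] at hj
    have := suppBd_mul ih hbase j hj
    push_cast at this ⊢
    omega

lemma suppBd_C (a : Polynomial ℤ) :
    ∀ j ∈ (LaurentPolynomial.C a : LaurentPolynomial (Polynomial ℤ)).coeff.support,
      (0 : ℤ) ≤ j ∧ j ≤ 0 := by
  intro j hj
  have h := LaurentPolynomial.support_C_mul_T a 0
  rw [LaurentPolynomial.T_zero, mul_one] at h
  have : j ∈ ({(0:ℤ)} : Finset ℤ) := h hj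
  simp at this
  omega

lemma contrib_suppBd {n : ℕ} (c T : (Fin n → Bool) → ℕ) (σ : Fin n → Bool) :
    ∀ j ∈ (contrib c T σ).coeff.support,
      (aC σ : ℤ) - (bC σ : ℤ) - 2 * ((c σ - 1 : ℕ) : ℤ) ≤ j ∧
      j ≤ (aC σ : ℤ) - (bC σ : ℤ) + 2 * ((c σ - 1 : ℕ) : ℤ) := by
  intro j hj
  have h := suppBd_mul (suppBd_mul (suppBd_T ((aC σ : ℤ) - (bC σ : ℤ)))
    (suppBd_pow (c σ - 1))) (suppBd_C (Polynomial.X ^ T σ)) j hj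
  obtain ⟨h1, h2⟩ := h
  constructor <;> omega

end Aux

/-- The span of a nonzero bracket is at most `2n + 2(c S_A + c S_B − 2)`, and at most
`4n` when `c S_A + c S_B ≤ n + 2`. -/
theorem stmt5 {n : ℕ} (c : (Fin n → Bool) → ℕ) (hc : IsCircleCount c)
    (T : (Fin n → Bool) → ℕ) (hne : bracket n c T ≠ 0) :
    spanDeg (bracket n c T) ≤ 2 * n + 2 * ((c (SA n) : ℤ) + (c (SB n) : ℤ) - 2) ∧
    (c (SA n) + c (SB n) ≤ n + 2 → spanDeg (bracket n c T) ≤ 4 * n) := by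
  obtain ⟨hc1, hc2⟩ := hc
  have key := cc_le c hc2
  have hcardA : ∀ σ : Fin n → Bool,
      (Finset.univ.filter fun i => σ i ≠ SA n i).card = bC σ := by
    intro σ
    have h1 : (Finset.univ.filter fun i => σ i ≠ SA n i)
        = Finset.univ.filter fun i => ¬ (σ i = true) := by
      simp [SA]
    have h2 := Finset.card_filter_add_card_filter_not
      (s := (Finset.univ : Finset (Fin n))) (p := fun i => σ i = true)
    rw [h1]
    have h3 : (Finset.univ : Finset (Fin n)).card = n := Finset.card_fin n
    unfold bC aC
    unfold aC at h2
    omega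
  have hcardB : ∀ σ : Fin n → Bool,
      (Finset.univ.filter fun i => σ i ≠ SB n i).card = aC σ := by
    intro σ
    have h1 : (Finset.univ.filter fun i => σ i ≠ SB n i)
        = Finset.univ.filter fun i => σ i = true := by
      simp [SB]
    rw [h1]; rfl
  have hA : ∀ σ : Fin n → Bool, c σ ≤ c (SA n) + bC σ := fun σ =>
    key (bC σ) σ (SA n) (hcardA σ)
  have hB : ∀ σ : Fin n → Bool, c σ ≤ c (SB n) + aC σ := fun σ =>
    key (aC σ) σ (SB n) (hcardB σ)
  have han : ∀ σ : Fin n → Bool, aC σ ≤ n := by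
    intro σ
    have := Finset.card_filter_le (Finset.univ : Finset (Fin n)) (fun i => σ i = true)
    simpa [aC] using this
  have hbr : ∀ j ∈ (bracket n c T).coeff.support,
      -(n : ℤ) - 2 * (c (SB n) : ℤ) + 2 ≤ j ∧ j ≤ (n : ℤ) + 2 * (c (SA n) : ℤ) - 2 := by
    intro j hj
    rw [bracket, AddMonoidAlgebra.coeff_sum] at hj
    obtain ⟨σ, -, hσ⟩ := Finsupp.mem_support_finset_sum j hj
    obtain ⟨h1, h2⟩ := contrib_suppBd c T σ j hσ
    have ha := hA σ
    have hb := hB σ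
    have h3 := han σ
    have h4 : bC σ = n - aC σ := rfl
    have h5 := hc1 σ
    constructor <;> omega
  have hsupp : (bracket n c T).coeff.support.Nonempty := Finsupp.support_nonempty_iff.mpr (fun h => hne (AddMonoidAlgebra.coeff_eq_zero.mp h))
  obtain ⟨M, hM⟩ := Finset.max_of_nonempty hsupp
  obtain ⟨m, hm⟩ := Finset.min_of_nonempty hsupp
  have hMs : M ∈ (bracket n c T).coeff.support := Finset.mem_of_max hM
  have hms : m ∈ (bracket n c T).coeff.support := Finset.mem_of_min hm
  have hmax : maxdeg (bracket n c T) = M := by rw [maxdeg, hM]; rfl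
  have hmin : mindeg (bracket n c T) = m := by rw [mindeg, hm]; rfl
  obtain ⟨-, hMle⟩ := hbr M hMs
  obtain ⟨hmge, -⟩ := hbr m hms
  constructor
  · rw [spanDeg, hmax, hmin]; omega
  · intro h
    rw [spanDeg, hmax, hmin]
    have h5 := hc1 (SA n)
    have h6 := hc1 (SB n)
    omega
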